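/- arXiv:2406.14700 — 5 statements merged into one kernel-verified Lean document; each statement's English description precedes it below -/
import Mathlib

section
/- For every real p with 1/2 ≤ p < 1 and every integer n ≥ 3, one has v_n(p) ≥ v_{n-1}(p) + 1, and the inequality is strict unless p = 1/2 and n = 3. -/
/-- `v p n` is the optimal expected number of heads in the coin game with `n` coins,
each landing heads with probability `p`. -/
noncomputable def v (p : ℝ) : ℕ → ℝ
  | 0 => 0
  | n + 1 =>
      ((n : ℝ) + 1) * p ^ (n + 1) + v p n * (1 - p) ^ (n + 1) +
        ∑ j ∈ (Finset.Icc 1 n).attach,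
          (((n + 1).choose j.1 : ℕ) : ℝ) * p ^ (j.1 : ℕ) * (1 - p) ^ (n + 1 - j.1) *
            ((Finset.Icc 1 j.1).attach.sup'
              (Finset.attach_nonempty_iff.mpr
                (Finset.nonempty_Icc.mpr (Finset.mem_Icc.mp j.2).1))
              (fun i => v p (n + 1 - i.1) + (i.1 : ℝ)))
decreasing_by
  · omega
  · have h := (Finset.mem_Icc.mp i.2).1
    omega

/-- `s p n = v p n - n + 1 - p`. -/
noncomputable def s (p : ℝ) (n : ℕ) : ℝ := v p n - n + 1 - p

/-!
Write `q = 1 - p` and `U n = n - v p n` for the deficit. As long as `v` gains at least one head per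
coin from `2` on, the optimal rule in the recursion is to set aside one head, except when all but
one coin show heads, where setting aside all of them may be better. This collapses the recursion to
`v p (n + 1) = v p n + 1 + gain p n (U n)`, with `gain p n` increasing and piecewise linear.
Since `U (n + 1) = U n - gain p n (U n)` and `U ↦ U - gain p n U` is monotone, `U (n + 1)` stays
above a zero `θ` of `gain p n`, and `gain p (n + 1) θ = q ^ (n + 1) (2p - 1) + p ^ (n + 1) q (θ - q)⁺`
is positive. The induction starts from `v p 3 - v p 2 - 1 ≥ (2p - 1) q³ (1 + p)²`.
-/

open Finset

lemma v_one (p : ℝ) : v p 1 = p := by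
  rw [v, sum_eq_zero fun j _ => absurd (mem_Icc.mp j.2) (by omega)]
  simp [v]

lemma sum_Icc_choose_mul_pow_mul_pow (p : ℝ) (n : ℕ) :
    ∑ j ∈ Icc 1 n, ((n + 1).choose j : ℝ) * p ^ j * (1 - p) ^ (n + 1 - j) =
      1 - p ^ (n + 1) - (1 - p) ^ (n + 1) := by
  have h := add_pow p (1 - p) (n + 1)
  rw [add_sub_cancel, one_pow, range_eq_Ico, sum_eq_sum_Ico_succ_bot (by omega),
    sum_Ico_succ_top (by omega)] at h
  simp only [Nat.choose_self, Nat.choose_zero_right, Nat.sub_self, Nat.sub_zero, pow_zero,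
    Nat.cast_one, mul_one, one_mul, zero_add] at h
  rw [← Finset.Ico_add_one_right_eq_Icc]
  have hsum := sum_congr rfl fun j (_ : j ∈ Ico 1 (n + 1)) =>
    (mul_rotate (((n + 1).choose j : ℝ)) (p ^ j) ((1 - p) ^ (n + 1 - j)))
  linarith

lemma pow_succ_add_succ_mul_pow_mul_le_one {p : ℝ} (hp0 : 0 ≤ p) (hp1 : p ≤ 1) (n : ℕ) :
    p ^ (n + 1) + (n + 1) * p ^ n * (1 - p) ≤ 1 := by
  induction n with
  | zero => simp
  | succ n ih =>
    have : 0 ≤ (n + 1) * p ^ n * (1 - p) ^ 2 := by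
      have := sub_nonneg.2 hp1
      positivity
    have : p ^ (n + 2) + (n + 2) * p ^ (n + 1) * (1 - p) =
        p ^ (n + 1) + (n + 1) * p ^ n * (1 - p) - (n + 1) * p ^ n * (1 - p) ^ 2 := by ring
    push_cast
    linarith

lemma v_sub_le_v_sub {p : ℝ} {n k : ℕ}
    (hmono : ∀ m, 2 ≤ m → m < n → v p m + 1 ≤ v p (m + 1)) (hk : 2 ≤ k) (hkn : k ≤ n) :
    v p k - k ≤ v p n - n := by
  induction n, hkn using Nat.le_induction with
  | base => rfl
  | succ n hkn ih =>
    have hn := hmono n (by omega) (by omega)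
    have ih := ih fun m hm hmn => hmono m hm (by omega)
    push_cast
    linarith

lemma sup'_attach_Icc_eq {p : ℝ} {n j : ℕ}
    (hmono : ∀ m, 2 ≤ m → m < n → v p m + 1 ≤ v p (m + 1))
    (hj : j ∈ Icc 1 n) (H : (Icc 1 j).attach.Nonempty) :
    (Icc 1 j).attach.sup' H (fun i => v p (n + 1 - i.1) + (i.1 : ℝ)) =
      v p n + 1 + if j = n then max 0 (n - v p n - (1 - p)) else 0 := by
  obtain ⟨hj1, hjn⟩ := mem_Icc.mp hj
  have hinner : ∀ i, 1 ≤ i → i < n → v p (n + 1 - i) + i ≤ v p n + 1 := by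
    intro i hi hin
    have := v_sub_le_v_sub hmono (k := n + 1 - i) (by omega) (by omega)
    rw [Nat.cast_sub (by omega)] at this
    push_cast at this
    linarith
  have hfirst : v p (n + 1 - 1) + ((1 : ℕ) : ℝ) = v p n + 1 := by simp
  have hlast : v p (n + 1 - n) + n = v p n + 1 + (n - v p n - (1 - p)) := by
    rw [Nat.add_sub_cancel_left, v_one]
    ring
  apply le_antisymm
  · refine sup'_le _ _ fun ⟨i, hi⟩ _ => ?_
    obtain ⟨hi1, hij⟩ := mem_Icc.mp hi
    rcases (show i < n ∨ i = n by omega) with hin | rfl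
    · have : (0 : ℝ) ≤ if j = n then max 0 (n - v p n - (1 - p)) else 0 := by
        split_ifs <;> simp
      linarith [hinner i hi1 hin]
    · rw [if_pos (by omega), hlast]
      gcongr
      exact le_max_right _ _
  · split_ifs with h
    · subst h
      rw [← max_add_add_left, add_zero]
      exact max_le (le_sup'_of_le _ (mem_attach _ ⟨1, by simp; omega⟩) hfirst.ge)
        (le_sup'_of_le _ (mem_attach _ ⟨j, by simp; omega⟩) hlast.ge)
    · rw [add_zero]
      exact le_sup'_of_le _ (mem_attach _ ⟨1, by simp; omega⟩) hfirst.ge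


noncomputable def gain (p : ℝ) (n : ℕ) (U : ℝ) : ℝ :=
  p ^ (n + 1) * U - (1 - p) ^ (n + 1) + (n + 1) * p ^ n * (1 - p) * max 0 (U - (1 - p))

theorem v_succ_eq_gain {p : ℝ} {n : ℕ} (hn : 1 ≤ n)
    (hmono : ∀ m, 2 ≤ m → m < n → v p m + 1 ≤ v p (m + 1)) :
    v p (n + 1) = v p n + 1 + gain p n (n - v p n) := by
  rw [v, sum_congr rfl fun j _ => by rw [sup'_attach_Icc_eq hmono j.2],
    sum_attach (Icc 1 n) fun j => ((n + 1).choose j : ℝ) * p ^ j * (1 - p) ^ (n + 1 - j) *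
      (v p n + 1 + if j = n then max 0 (n - v p n - (1 - p)) else 0)]
  simp only [mul_add, sum_add_distrib, ← sum_mul, sum_Icc_choose_mul_pow_mul_pow, mul_ite,
    mul_zero, sum_ite_eq', mem_Icc, hn, le_refl, and_self, if_true]
  rw [Nat.choose_succ_self_right, Nat.add_sub_cancel_left, gain]
  push_cast
  ring

lemma continuous_gain (p : ℝ) (n : ℕ) : Continuous (gain p n) := by
  unfold gain
  fun_prop

lemma gain_monotone {p : ℝ} (hp0 : 0 ≤ p) (hp1 : p ≤ 1) (n : ℕ) : Monotone (gain p n) := by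
  intro U W h
  have := sub_nonneg.2 hp1
  unfold gain
  gcongr

lemma sub_gain_monotone {p : ℝ} (hp0 : 0 ≤ p) (hp1 : p ≤ 1) (n : ℕ) :
    Monotone fun U => U - gain p n U := by
  intro U W h
  have hq := sub_nonneg.2 hp1
  have hb : 0 ≤ (n + 1) * p ^ n * (1 - p) := by positivity
  have hmax : max 0 (W - (1 - p)) ≤ max 0 (U - (1 - p)) + (W - U) :=
    max_le (by linarith [le_max_left 0 (U - (1 - p))])
      (by linarith [le_max_right 0 (U - (1 - p))])
  have hab := pow_succ_add_succ_mul_pow_mul_le_one hp0 hp1 n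
  simp only [gain]
  nlinarith [mul_le_mul_of_nonneg_left hmax hb, mul_nonneg (sub_nonneg.2 hab) (sub_nonneg.2 h)]

lemma gain_succ (p : ℝ) (n : ℕ) (U : ℝ) :
    gain p (n + 1) U = p * gain p n U + (1 - p) ^ (n + 1) * (2 * p - 1) +
      p ^ (n + 1) * (1 - p) * max 0 (U - (1 - p)) := by
  unfold gain
  push_cast
  ring

lemma gain_succ_pos_of_gain_eq_zero {p : ℝ} (hp : 1 / 2 ≤ p) (hp1 : p < 1) {n : ℕ} {θ : ℝ}
    (hθ : gain p n θ = 0) : 0 < gain p (n + 1) θ := by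
  have hq : 0 < 1 - p := by linarith
  rw [gain_succ, hθ, mul_zero, zero_add]
  rcases hp.lt_or_eq with hp | rfl
  · have : 0 < (1 - p) ^ (n + 1) * (2 * p - 1) := by
      have : 0 < 2 * p - 1 := by linarith
      positivity
    have : 0 ≤ p ^ (n + 1) * (1 - p) * max 0 (θ - (1 - p)) := by positivity
    linarith
  · have hθq : 1 - 1 / 2 < θ := by
      by_contra! h
      rw [gain, max_eq_left (by linarith)] at hθ
      have : (1 / 2 : ℝ) ^ (n + 1) * (θ - 1) = 0 := by linarith
      have : θ = 1 := by simpa [sub_eq_zero] using this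
      linarith
    have : 0 < max 0 (θ - (1 - 1 / 2)) := lt_max_of_lt_right (by linarith)
    positivity

lemma gain_succ_sub_gain_pos {p : ℝ} (hp : 1 / 2 ≤ p) (hp1 : p < 1) {n : ℕ} {U : ℝ}
    (hU : 0 ≤ gain p n U) : 0 < gain p (n + 1) (U - gain p n U) := by
  have hp0 : 0 ≤ p := by linarith
  have hgain0 : gain p n 0 < 0 := by
    have : 0 < (1 - p) ^ (n + 1) := pow_pos (by linarith) _
    simp only [gain, mul_zero, zero_sub, max_eq_left (by linarith : -(1 - p) ≤ 0)]
    linarith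
  have hU0 : 0 ≤ U := le_of_not_gt fun h =>
    hU.not_gt ((gain_monotone hp0 hp1.le n h.le).trans_lt hgain0)
  obtain ⟨θ, hθU, hθ⟩ := intermediate_value_Icc hU0 (continuous_gain p n).continuousOn
    ⟨hgain0.le, hU⟩
  calc 0 < gain p (n + 1) θ := gain_succ_pos_of_gain_eq_zero hp hp1 hθ
    _ = gain p (n + 1) (θ - gain p n θ) := by rw [hθ, sub_zero]
    _ ≤ gain p (n + 1) (U - gain p n U) :=
      gain_monotone hp0 hp1.le _ (sub_gain_monotone hp0 hp1.le n hθU.2)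

lemma v_two (p : ℝ) : v p 2 = p + 1 + p ^ 2 * (1 - p) - (1 - p) ^ 2 := by
  rw [v_succ_eq_gain le_rfl fun m hm hm1 => absurd hm1 (by omega), v_one, gain]
  norm_num
  ring

lemma le_v_three_sub_v_two {p : ℝ} (hp1 : p ≤ 1) :
    (2 * p - 1) * (1 - p) ^ 3 * (1 + p) ^ 2 ≤ v p 3 - (v p 2 + 1) := by
  rw [v_succ_eq_gain (n := 2) (by norm_num) fun m hm hm2 => absurd hm2 (by omega)]
  have hb : 0 ≤ 3 * p ^ 2 * (1 - p) := by
    have := sub_nonneg.2 hp1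
    positivity
  calc (2 * p - 1) * (1 - p) ^ 3 * (1 + p) ^ 2
      = p ^ 3 * (2 - v p 2) - (1 - p) ^ 3 + 3 * p ^ 2 * (1 - p) * (2 - v p 2 - (1 - p)) := by
        rw [v_two]
        ring
    _ ≤ gain p 2 (2 - v p 2) := by
        have := mul_le_mul_of_nonneg_left (le_max_right 0 (2 - v p 2 - (1 - p))) hb
        unfold gain
        push_cast
        linarith
    _ = _ := by push_cast; ring

lemma v_succ_add_one_lt {p : ℝ} (hp : 1 / 2 ≤ p) (hp1 : p < 1) {n : ℕ} (hn : 2 ≤ n)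
    (hmono : ∀ m, 2 ≤ m → m ≤ n → v p m + 1 ≤ v p (m + 1)) : v p (n + 1) + 1 < v p (n + 2) := by
  have hstep := v_succ_eq_gain (by omega) fun m hm hmn => hmono m hm hmn.le
  have hstep' := v_succ_eq_gain (n := n + 1) (by omega) fun m hm hmn => hmono m hm (by omega)
  have hgain : 0 ≤ gain p n (n - v p n) := by linarith [hmono n hn le_rfl]
  have hdeficit : ((n + 1 : ℕ) : ℝ) - v p (n + 1) = (n - v p n) - gain p n (n - v p n) := by
    push_cast
    linarith
  rw [hstep', hdeficit]
  linarith [gain_succ_sub_gain_pos hp hp1 hgain]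

lemma v_add_one_le_v_succ {p : ℝ} (hp : 1 / 2 ≤ p) (hp1 : p < 1) {n : ℕ} (hn : 2 ≤ n) :
    v p n + 1 ≤ v p (n + 1) := by
  suffices ∀ N, 2 ≤ N → ∀ m, 2 ≤ m → m ≤ N → v p m + 1 ≤ v p (m + 1) from
    this n hn n hn le_rfl
  intro N hN
  induction N, hN using Nat.le_induction with
  | base =>
    intro m hm hm2
    obtain rfl : m = 2 := by omega
    have : 0 ≤ (2 * p - 1) * (1 - p) ^ 3 * (1 + p) ^ 2 := by
      have : 0 ≤ 2 * p - 1 := by linarith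
      have : 0 ≤ 1 - p := by linarith
      positivity
    linarith [le_v_three_sub_v_two hp1.le]
  | succ N hN ih =>
    intro m hm hmN
    rcases hmN.lt_or_eq with hmN | rfl
    · exact ih m hm (by omega)
    · exact (v_succ_add_one_lt hp hp1 hN ih).le

theorem coin_game_v_increase (p : ℝ) (hp1 : 1 / 2 ≤ p) (hp2 : p < 1)
    (n : ℕ) (hn : 3 ≤ n) :
    v p (n - 1) + 1 ≤ v p n ∧ (¬(p = 1 / 2 ∧ n = 3) → v p (n - 1) + 1 < v p n) := by
  obtain ⟨m, rfl⟩ : ∃ m, n = m + 1 := ⟨n - 1, by omega⟩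
  rw [Nat.add_sub_cancel]
  refine ⟨v_add_one_le_v_succ hp1 hp2 (by omega), fun hne => ?_⟩
  rcases (show m = 2 ∨ 3 ≤ m by omega) with rfl | hm
  · have : 0 < (2 * p - 1) * (1 - p) ^ 3 * (1 + p) ^ 2 := by
      have : 0 < 2 * p - 1 := by
        have := lt_of_le_of_ne hp1 fun h => hne ⟨h.symm, rfl⟩
        linarith
      have : 0 < 1 - p := by linarith
      positivity
    linarith [le_v_three_sub_v_two hp2.le]
  · obtain ⟨k, rfl⟩ : ∃ k, m = k + 1 := ⟨m - 1, by omega⟩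
    exact v_succ_add_one_lt hp1 hp2 (by omega) fun j hj _ => v_add_one_le_v_succ hp1 hp2 hj
end

section
/- Let φ = (√5 − 1)/2. For every real p with φ ≤ p < 1 and every integer n ≥ 2, one has v_{n-1}(p) + 1 ≤ v_n(p) < n − ((1−p)/p)^{n+1}, and the lower inequality is strict unless n = 2 and p = φ. -/
/-! Write `g n = n - v p n` and `r = (1 - p) / p`. As long as `g` is nonincreasing on `[1, n]`,
after any throw of `n + 1` coins showing both faces it is optimal to keep a single head, and the
recursion collapses to `g (n + 1) = (1 - p ^ (n + 1)) * g n + p ^ (n + 1) * r ^ (n + 1)`, a convex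
combination of `g n` and `r ^ (n + 1)`. So `r ^ (n + 1) ≤ g n` yields both `g (n + 1) ≤ g n` and
`r ^ (n + 2) < r ^ (n + 1) ≤ g (n + 1)` (as `r < 1`), and both bounds propagate from
`g 1 = 1 - p ≥ r ^ 2`, which is `p ^ 2 + p ≥ 1`, i.e. `φ ≤ p`. Once `r ^ (n + 1) < g n`, which holds
for `n ≥ 2` and, when `φ < p`, also for `n = 1`, the same combination gives `g (n + 1) < g n`. -/

open Finset Real

theorem add_pow_eq_add_add_sum_Icc {R : Type*} [CommSemiring R] (x y : R) (n : ℕ) :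
    (x + y) ^ (n + 1) = x ^ (n + 1) + y ^ (n + 1) +
      ∑ j ∈ Icc 1 n, ((n + 1).choose j : R) * x ^ j * y ^ (n + 1 - j) := by
  rw [add_pow, sum_range_succ, range_eq_Ico, sum_eq_sum_Ico_succ_bot (Nat.succ_pos n),
    zero_add, Nat.succ_eq_add_one, Ico_add_one_right_eq_Icc]
  simp only [Nat.choose_self, Nat.choose_zero_right, Nat.sub_self, Nat.sub_zero, pow_zero,
    Nat.cast_one, mul_one, one_mul]
  rw [sum_congr rfl fun j _ => (mul_rotate _ _ _).symm]
  ring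

theorem AntitoneOn.Icc_add_one {α : Type*} [Preorder α] {f : ℕ → α} {a n : ℕ} (hn : a ≤ n)
    (hf : AntitoneOn f (Set.Icc a n)) (hsucc : f (n + 1) ≤ f n) :
    AntitoneOn f (Set.Icc a (n + 1)) := by
  rw [← Order.succ_eq_add_one,
    ← Set.insert_Icc_right_eq_Icc_succ (hn.trans (Order.le_succ n)), Set.antitoneOn_insert_iff]
  exact ⟨fun b hb _ => hsucc.trans (hf hb ⟨hn, le_rfl⟩ hb.2),
    fun b hb hle => absurd hle (not_le.2 (Order.lt_succ_of_le hb.2)), hf⟩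

namespace CoinGame

noncomputable def gap (p : ℝ) (n : ℕ) : ℝ := n - v p n

theorem v_one (p : ℝ) : v p 1 = p := by
  rw [v, sum_eq_zero fun j _ => absurd (mem_Icc.mp j.2) (by omega)]
  simp [v]

theorem gap_one (p : ℝ) : gap p 1 = 1 - p := by
  simp [gap, v_one]

theorem gap_sub_gap_succ (p : ℝ) (n : ℕ) :
    gap p n - gap p (n + 1) = v p (n + 1) - (v p n + 1) := by
  simp only [gap]
  push_cast
  ring

theorem sup'_v_add_eq_of_antitoneOn_gap {p : ℝ} {n : ℕ} (h : AntitoneOn (gap p) (Set.Icc 1 n))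
    {j : ℕ} (hj : j ∈ Icc 1 n) (hne : (Icc 1 j).attach.Nonempty) :
    (Icc 1 j).attach.sup' hne (fun i => v p (n + 1 - i.1) + (i.1 : ℝ)) = v p n + 1 := by
  have hj := mem_Icc.mp hj
  refine le_antisymm (sup'_le _ _ fun ⟨i, hi⟩ _ => ?_)
    (le_sup'_of_le _ (mem_attach _ ⟨1, mem_Icc.mpr ⟨le_rfl, hj.1⟩⟩) (by simp))
  have hi := mem_Icc.mp hi
  have hle : gap p n ≤ gap p (n + 1 - i) := h ⟨by omega, by omega⟩ ⟨by omega, le_rfl⟩ (by omega)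
  simp only [gap, Nat.cast_sub (by omega : i ≤ n + 1)] at hle
  push_cast at hle
  linarith

theorem gap_succ_of_antitoneOn {p : ℝ} {n : ℕ} (h : AntitoneOn (gap p) (Set.Icc 1 n)) :
    gap p (n + 1) = (1 - p ^ (n + 1)) * gap p n + (1 - p) ^ (n + 1) := by
  have hsum := add_pow_eq_add_add_sum_Icc p (1 - p) n
  rw [add_sub_cancel, one_pow] at hsum
  rw [gap, v, sum_congr rfl fun j _ => by rw [sup'_v_add_eq_of_antitoneOn_gap h j.2], ← sum_mul,
    sum_attach (Icc 1 n) fun j => ((n + 1).choose j : ℝ) * p ^ j * (1 - p) ^ (n + 1 - j), gap]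
  push_cast
  linear_combination (v p n + 1) * hsum

theorem gap_succ_eq_of_antitoneOn {p : ℝ} (hp : p ≠ 0) {n : ℕ}
    (h : AntitoneOn (gap p) (Set.Icc 1 n)) :
    gap p (n + 1) = (1 - p ^ (n + 1)) * gap p n + p ^ (n + 1) * ((1 - p) / p) ^ (n + 1) := by
  rw [gap_succ_of_antitoneOn h, div_pow, mul_div_cancel₀ _ (pow_ne_zero _ hp)]

theorem gap_succ_lt_gap {p : ℝ} (hp : 0 < p) {n : ℕ} (h : AntitoneOn (gap p) (Set.Icc 1 n))
    (hgap : ((1 - p) / p) ^ (n + 1) < gap p n) : gap p (n + 1) < gap p n := by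
  have hpow : 0 < p ^ (n + 1) := pow_pos hp _
  rw [gap_succ_eq_of_antitoneOn hp.ne' h]
  nlinarith

theorem gap_succ_le_gap {p : ℝ} (hp : 0 < p) {n : ℕ} (h : AntitoneOn (gap p) (Set.Icc 1 n))
    (hgap : ((1 - p) / p) ^ (n + 1) ≤ gap p n) : gap p (n + 1) ≤ gap p n := by
  have hpow : 0 < p ^ (n + 1) := pow_pos hp _
  rw [gap_succ_eq_of_antitoneOn hp.ne' h]
  nlinarith

theorem pow_lt_gap_succ {p : ℝ} (hhalf : 1 / 2 < p) (hp1 : p < 1) {n : ℕ}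
    (h : AntitoneOn (gap p) (Set.Icc 1 n)) (hgap : ((1 - p) / p) ^ (n + 1) ≤ gap p n) :
    ((1 - p) / p) ^ (n + 2) < gap p (n + 1) := by
  have hp : 0 < p := by linarith
  set r := (1 - p) / p
  have hr0 : 0 < r := div_pos (by linarith) hp
  have hr1 : r < 1 := (div_lt_one hp).mpr (by linarith)
  have hP : p ^ (n + 1) ≤ 1 := pow_le_one₀ hp.le hp1.le
  calc r ^ (n + 2) < r ^ (n + 1) := pow_lt_pow_right_of_lt_one₀ hr0 hr1 (by omega)
    _ = (1 - p ^ (n + 1)) * r ^ (n + 1) + p ^ (n + 1) * r ^ (n + 1) := by ring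
    _ ≤ (1 - p ^ (n + 1)) * gap p n + p ^ (n + 1) * r ^ (n + 1) := by gcongr
    _ = gap p (n + 1) := (gap_succ_eq_of_antitoneOn hp.ne' h).symm

theorem antitoneOn_gap_and_pow_le_gap {p : ℝ} (hhalf : 1 / 2 < p) (hp1 : p < 1)
    (hbase : ((1 - p) / p) ^ 2 ≤ gap p 1) {n : ℕ} (hn : 1 ≤ n) :
    AntitoneOn (gap p) (Set.Icc 1 n) ∧ ((1 - p) / p) ^ (n + 1) ≤ gap p n := by
  induction n, hn using Nat.le_induction with
  | base => exact ⟨(Set.Icc_self 1 ▸ Set.subsingleton_singleton).antitoneOn _, hbase⟩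
  | succ n hn ih =>
    exact ⟨ih.1.Icc_add_one hn (gap_succ_le_gap (by linarith) ih.1 ih.2),
      (pow_lt_gap_succ hhalf hp1 ih.1 ih.2).le⟩

theorem sq_odds_le_gap_one_iff {p : ℝ} (hp0 : 0 < p) (hp1 : p < 1) :
    ((1 - p) / p) ^ 2 ≤ gap p 1 ↔ 1 - p ≤ p ^ 2 := by
  rw [gap_one, div_pow, div_le_iff₀ (by positivity), sq (1 - p)]
  exact mul_le_mul_iff_right₀ (sub_pos.2 hp1)

theorem sq_odds_lt_gap_one_iff {p : ℝ} (hp0 : 0 < p) (hp1 : p < 1) :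
    ((1 - p) / p) ^ 2 < gap p 1 ↔ 1 - p < p ^ 2 := by
  rw [gap_one, div_pow, div_lt_iff₀ (by positivity), sq (1 - p)]
  exact mul_lt_mul_iff_right₀ (sub_pos.2 hp1)

end CoinGame

theorem sq_add_self_golden : ((√5 - 1) / 2) ^ 2 + (√5 - 1) / 2 = 1 := by
  linear_combination Real.sq_sqrt (show (0 : ℝ) ≤ 5 by norm_num) / 4

theorem half_lt_golden : 1 / 2 < (√5 - 1) / 2 := by
  have : (2 : ℝ) < √5 := by
    rw [Real.lt_sqrt zero_le_two]
    norm_num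
  linarith

theorem one_sub_le_sq_of_golden_le {p : ℝ} (hp : (√5 - 1) / 2 ≤ p) : 1 - p ≤ p ^ 2 := by
  nlinarith [sq_add_self_golden, half_lt_golden]

theorem one_sub_lt_sq_of_golden_lt {p : ℝ} (hp : (√5 - 1) / 2 < p) : 1 - p < p ^ 2 := by
  nlinarith [sq_add_self_golden, half_lt_golden]

open CoinGame

theorem coin_game_bounds_for_phi (p : ℝ) (hp1 : (Real.sqrt 5 - 1) / 2 ≤ p) (hp2 : p < 1)
    (n : ℕ) (hn : 2 ≤ n) :
    v p (n - 1) + 1 ≤ v p n ∧ v p n < (n : ℝ) - ((1 - p) / p) ^ (n + 1) ∧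
      (¬(n = 2 ∧ p = (Real.sqrt 5 - 1) / 2) → v p (n - 1) + 1 < v p n) := by
  have hhalf : 1 / 2 < p := half_lt_golden.trans_le hp1
  have hp0 : 0 < p := by linarith
  have hbase := (sq_odds_le_gap_one_iff hp0 hp2).mpr (one_sub_le_sq_of_golden_le hp1)
  obtain ⟨m, rfl⟩ : ∃ m, n = m + 1 := ⟨n - 1, by omega⟩
  obtain ⟨hanti, hgap⟩ := antitoneOn_gap_and_pow_le_gap hhalf hp2 hbase (by omega : 1 ≤ m)
  have hstep := gap_sub_gap_succ p m
  rw [Nat.add_sub_cancel]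
  refine ⟨?_, ?_, fun hne => ?_⟩
  · linarith [gap_succ_le_gap hp0 hanti hgap]
  · exact lt_sub_comm.mp (pow_lt_gap_succ hhalf hp2 hanti hgap)
  · suffices ((1 - p) / p) ^ (m + 1) < gap p m by linarith [gap_succ_lt_gap hp0 hanti this]
    rcases (by omega : m = 1 ∨ 2 ≤ m) with rfl | hm
    · have : (√5 - 1) / 2 < p := hp1.lt_of_ne fun h => hne ⟨rfl, h.symm⟩
      exact (sq_odds_lt_gap_one_iff hp0 hp2).mpr (one_sub_lt_sq_of_golden_lt this)
    · obtain ⟨k, rfl⟩ : ∃ k, m = k + 1 := ⟨m - 1, by omega⟩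
      obtain ⟨hanti', hgap'⟩ := antitoneOn_gap_and_pow_le_gap hhalf hp2 hbase (by omega : 1 ≤ k)
      exact pow_lt_gap_succ hhalf hp2 hanti' hgap'
end

section
/- Let φ = (√5 − 1)/2. For all real p with φ ≤ p < 1, one has s(p) < 1 − p − (1−p)^{(log(1−p)/log(p)) + 2}. -/
/-! For `n ≥ 1` the game value satisfies `v p n ≤ n - ∏_{m=1}^n (1 - p^m)`, by strong induction
on the recursion: every continuation `v p (n + 1 - i) + i` is at most `n + 1 - ∏_{m=1}^n (1 - p^m)`,
and the binomial weights of these terms sum to `1 - p^(n+1) - (1-p)^(n+1)`.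
Bernoulli's inequality gives `(1-p)^(p^(m-1)) ≤ 1 - p^m`, so by the geometric series the product
is at least `(1-p)^(1/(1-p))` and `s(p) ≤ 1 - p - (1-p)^(1/(1-p))`. It remains to compare
exponents: `1/(1-p) < log(1-p)/log p + 2` for `1/2 ≤ p < 1`, because `log(1-p) < -p` and
`log p ≥ 1 - 1/p`. -/

open Real Finset

theorem sum_Icc_choose_mul_pow {R : Type*} [CommRing R] (x y : R) (n : ℕ) :
    ∑ j ∈ Icc 1 n, ((n + 1).choose j : R) * x ^ j * y ^ (n + 1 - j) =
      (x + y) ^ (n + 1) - x ^ (n + 1) - y ^ (n + 1) := by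
  simp_rw [mul_rotate ((Nat.choose _ _ : ℕ) : R)]
  rw [add_pow, range_eq_Ico, sum_eq_sum_Ico_succ_bot (by omega), sum_Ico_succ_top (by omega),
    Ico_add_one_right_eq_Icc]
  simp only [Nat.choose_self, Nat.choose_zero_right, Nat.sub_self, Nat.sub_zero, zero_add,
    pow_zero, one_mul, mul_one, Nat.cast_one]
  ring

noncomputable def eulerProd (p : ℝ) (n : ℕ) : ℝ := ∏ m ∈ range n, (1 - p ^ (m + 1))

theorem eulerProd_succ (p : ℝ) (n : ℕ) :
    eulerProd p (n + 1) = eulerProd p n * (1 - p ^ (n + 1)) :=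
  prod_range_succ _ _

section

variable {p : ℝ}

theorem eulerProd_antitone (hp0 : 0 ≤ p) (hp1 : p ≤ 1) : Antitone (eulerProd p) := by
  refine antitone_nat_of_succ_le fun n => ?_
  rw [eulerProd_succ]
  refine mul_le_of_le_one_right (prod_nonneg fun m _ => ?_) (by simp [pow_nonneg hp0])
  simpa using pow_le_one₀ hp0 hp1

theorem one_sub_rpow_pow_le (hp0 : 0 ≤ p) (hp1 : p ≤ 1) (m : ℕ) :
    (1 - p) ^ (p ^ m) ≤ 1 - p ^ (m + 1) := by
  have h := rpow_one_add_le_one_add_mul_self (s := -p) (by linarith) (pow_nonneg hp0 m)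
    (pow_le_one₀ hp0 hp1)
  rwa [mul_neg, ← pow_succ, ← sub_eq_add_neg, ← sub_eq_add_neg] at h

theorem one_sub_rpow_inv_le_eulerProd (hp0 : 0 ≤ p) (hp1 : p < 1) (n : ℕ) :
    (1 - p) ^ (1 - p)⁻¹ ≤ eulerProd p n :=
  calc (1 - p) ^ (1 - p)⁻¹ ≤ (1 - p) ^ (∑ m ∈ range n, p ^ m) :=
        rpow_le_rpow_of_exponent_ge (by linarith) (by linarith)
          (sum_le_hasSum _ (fun m _ => pow_nonneg hp0 m) (hasSum_geometric_of_lt_one hp0 hp1))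
    _ = ∏ m ∈ range n, (1 - p) ^ (p ^ m) := rpow_sum_of_pos (by linarith) _ _
    _ ≤ eulerProd p n :=
        prod_le_prod (fun m _ => by positivity) fun m _ => one_sub_rpow_pow_le hp0 hp1.le m

theorem v_succ_le (hp0 : 0 ≤ p) (hp1 : p ≤ 1) {n : ℕ} {c : ℝ}
    (hc : ∀ i ∈ Icc 1 n, v p (n + 1 - i) + i ≤ c) :
    v p (n + 1) ≤ (n + 1) * p ^ (n + 1) + v p n * (1 - p) ^ (n + 1) +
      (1 - p ^ (n + 1) - (1 - p) ^ (n + 1)) * c := by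
  rw [v]
  gcongr
  have hq : 0 ≤ 1 - p := by linarith
  calc _ ≤ ∑ j ∈ (Icc 1 n).attach,
          ((n + 1).choose j.1 : ℝ) * p ^ j.1 * (1 - p) ^ (n + 1 - j.1) * c := by
        refine sum_le_sum fun j _ => mul_le_mul_of_nonneg_left ?_ (by positivity)
        exact sup'_le _ _ fun i _ => hc i (Icc_subset_Icc_right (mem_Icc.1 j.2).2 i.2)
    _ = (1 - p ^ (n + 1) - (1 - p) ^ (n + 1)) * c := by
        rw [← sum_mul, sum_attach (Icc 1 n) fun j =>
            ((n + 1).choose j : ℝ) * p ^ j * (1 - p) ^ (n + 1 - j),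
          sum_Icc_choose_mul_pow, add_sub_cancel, one_pow]

theorem v_le_sub_eulerProd (hp0 : 0 ≤ p) (hp1 : p ≤ 1) {n : ℕ} (hn : 1 ≤ n) :
    v p n ≤ n - eulerProd p n := by
  induction n using Nat.strong_induction_on with
  | _ n ih =>
    obtain ⟨n, rfl⟩ : ∃ m, n = m + 1 := ⟨n - 1, by omega⟩
    rcases Nat.eq_zero_or_pos n with rfl | hn0
    · have h := v_succ_le hp0 hp1 (n := 0) (c := 0) (by simp)
      simp [v, eulerProd] at h ⊢
      linarith
    · have hstep := v_succ_le hp0 hp1 (n := n) (c := n + 1 - eulerProd p n) fun i hi => by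
        obtain ⟨hi1, hin⟩ := mem_Icc.1 hi
        have hv := ih (n + 1 - i) (by omega) (by omega)
        have hL := eulerProd_antitone hp0 hp1 (show n + 1 - i ≤ n by omega)
        rw [Nat.cast_sub (by omega)] at hv
        push_cast at hv
        linarith
      have hq := pow_nonneg (sub_nonneg.2 hp1) (n + 1)
      have hvn := mul_le_mul_of_nonneg_right (ih n (by omega) hn0) hq
      rw [eulerProd_succ]
      push_cast
      linarith

theorem s_le_one_sub_sub_rpow (hp0 : 0 ≤ p) (hp1 : p < 1) {n : ℕ} (hn : 1 ≤ n) :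
    s p n ≤ 1 - p - (1 - p) ^ (1 - p)⁻¹ := by
  have hv := v_le_sub_eulerProd hp0 hp1.le hn
  have hL := one_sub_rpow_inv_le_eulerProd hp0 hp1 n
  unfold s
  linarith

theorem inv_one_sub_lt_log_div_log_add_two (hp : 1 / 2 ≤ p) (hp1 : p < 1) :
    (1 - p)⁻¹ < log (1 - p) / log p + 2 := by
  have hq : 0 < 1 - p := by linarith
  have hlogp : log p < 0 := log_neg (by linarith) hp1
  have hlogq : log (1 - p) < -p := by
    linarith [log_lt_sub_one_of_pos hq (by linarith)]
  have hcoef : 0 ≤ (1 - p)⁻¹ - 2 := by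
    rw [sub_nonneg, le_inv_comm₀ (by norm_num) hq]
    linarith
  rw [← sub_lt_iff_lt_add, lt_div_iff_of_neg hlogp]
  calc log (1 - p) < -p := hlogq
    _ ≤ ((1 - p)⁻¹ - 2) * (1 - p⁻¹) := by
      field_simp
      nlinarith [pow_pos hq 3]
    _ ≤ ((1 - p)⁻¹ - 2) * log p :=
      mul_le_mul_of_nonneg_left (one_sub_inv_le_log_of_pos (by linarith)) hcoef

end

theorem coin_game_s_upper_bound_phi (S : ℝ → ℝ)
    (hS : ∀ p : ℝ, 1 / 2 ≤ p → p ≤ 1 →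
      Filter.Tendsto (fun n : ℕ => s p n) Filter.atTop (nhds (S p)))
    (p : ℝ) (hp1 : (Real.sqrt 5 - 1) / 2 ≤ p) (hp2 : p < 1) :
    S p < 1 - p - (1 - p) ^ (Real.log (1 - p) / Real.log p + 2 : ℝ) := by
  have hp : 1 / 2 ≤ p := by
    have : 2 ≤ Real.sqrt 5 := (le_sqrt (by norm_num) (by norm_num)).2 (by norm_num)
    linarith
  have hS_le : S p ≤ 1 - p - (1 - p) ^ (1 - p)⁻¹ :=
    le_of_tendsto (hS p hp hp2.le) (Filter.eventually_atTop.2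
      ⟨1, fun n hn => s_le_one_sub_sub_rpow (by linarith) hp2 hn⟩)
  have hlt : (1 - p) ^ (Real.log (1 - p) / Real.log p + 2) < (1 - p) ^ (1 - p)⁻¹ :=
    rpow_lt_rpow_of_exponent_gt (by linarith) (by linarith)
      (inv_one_sub_lt_log_div_log_add_two hp hp2)
  linarith
end

section
/- For all real numbers p, q with 0 ≤ q < p ≤ 1 and every positive integer n, one has v_n(p) > v_n(q). -/
open Finset

noncomputable def E (n : ℕ) (x : ℝ) (g : ℕ → ℝ) : ℝ :=
  ∑ j ∈ Finset.range (n+1), (n.choose j : ℝ) * x^j * (1-x)^(n-j) * g j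

lemma E_zero (x : ℝ) (g : ℕ → ℝ) : E 0 x g = g 0 := by simp [E]

lemma E_succ (n : ℕ) (x : ℝ) (g : ℕ → ℝ) :
    E (n+1) x g = (1-x) * E n x g + x * E n x (fun j => g (j+1)) := by
  have hL : E (n+1) x g
      = ∑ j ∈ range (n+1), ((n+1).choose (j+1) : ℝ) * x^(j+1) * (1-x)^(n-j) * g (j+1)
        + (1-x)^(n+1) * g 0 := by
    rw [E, Finset.sum_range_succ']
    simp [Nat.succ_sub_succ]
  have hR1 : (1-x) * E n x g
      = ∑ j ∈ range (n+1), (n.choose j : ℝ) * x^j * (1-x)^(n+1-j) * g j := by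
    rw [E, Finset.mul_sum]
    refine Finset.sum_congr rfl fun j hj => ?_
    have hj' : j ≤ n := by simpa using Nat.lt_succ_iff.mp (Finset.mem_range.mp hj)
    have : n + 1 - j = (n - j) + 1 := by omega
    rw [this]; ring
  have hR2 : x * E n x (fun j => g (j+1))
      = ∑ j ∈ range (n+1), (n.choose j : ℝ) * x^(j+1) * (1-x)^(n-j) * g (j+1) := by
    rw [E, Finset.mul_sum]
    refine Finset.sum_congr rfl fun j hj => ?_
    ring
  rw [hL, hR1, hR2]
  have split : ∀ j ∈ range (n+1),
      ((n+1).choose (j+1) : ℝ) * x^(j+1) * (1-x)^(n-j) * g (j+1)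
      = (n.choose j : ℝ) * x^(j+1) * (1-x)^(n-j) * g (j+1)
        + (n.choose (j+1) : ℝ) * x^(j+1) * (1-x)^(n-j) * g (j+1) := by
    intro j hj
    rw [Nat.choose_succ_succ]
    push_cast; ring
  rw [Finset.sum_congr rfl split, Finset.sum_add_distrib]
  have h2 : ∑ j ∈ range (n+1), (n.choose (j+1) : ℝ) * x^(j+1) * (1-x)^(n-j) * g (j+1)
      + (1-x)^(n+1) * g 0
      = ∑ j ∈ range (n+1), (n.choose j : ℝ) * x^j * (1-x)^(n+1-j) * g j := by
    rw [Finset.sum_range_succ' (fun j => (n.choose j : ℝ) * x^j * (1-x)^(n+1-j) * g j) n]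
    have : ∑ j ∈ range (n+1), (n.choose (j+1) : ℝ) * x^(j+1) * (1-x)^(n-j) * g (j+1)
        = ∑ j ∈ range n, (n.choose (j+1) : ℝ) * x^(j+1) * (1-x)^(n-j) * g (j+1) := by
      rw [Finset.sum_range_succ]
      simp
    rw [this]
    congr 1
    · refine Finset.sum_congr rfl fun j hj => ?_
      have hj' : j < n := Finset.mem_range.mp hj
      have : n + 1 - (j+1) = n - j := by omega
      rw [this]
    · simp
  linarith [h2]

lemma coeff_nonneg {x : ℝ} (hx0 : 0 ≤ x) (hx1 : x ≤ 1) (n j k : ℕ) :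
    (0:ℝ) ≤ (n.choose j : ℝ) * x^j * (1-x)^k :=
  mul_nonneg (mul_nonneg (Nat.cast_nonneg _) (pow_nonneg hx0 _))
    (pow_nonneg (by linarith) _)

lemma E_le_E (n : ℕ) (x : ℝ) (hx0 : 0 ≤ x) (hx1 : x ≤ 1) {f g : ℕ → ℝ}
    (h : ∀ j ≤ n, f j ≤ g j) : E n x f ≤ E n x g := by
  refine Finset.sum_le_sum fun j hj => ?_
  have hj' : j ≤ n := Nat.lt_succ_iff.mp (Finset.mem_range.mp hj)
  exact mul_le_mul_of_nonneg_left (h j hj') (coeff_nonneg hx0 hx1 n j _)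

lemma E_const (n : ℕ) (x : ℝ) (c : ℝ) : E n x (fun _ => c) = c := by
  have h := add_pow x (1-x) n
  have hx : x + (1-x) = 1 := by ring
  rw [hx, one_pow] at h
  have : E n x (fun _ => c) = (∑ k ∈ range (n+1), x^k * (1-x)^(n-k) * (n.choose k : ℝ)) * c := by
    rw [Finset.sum_mul, E]
    refine Finset.sum_congr rfl fun j hj => ?_
    ring
  rw [this, ← h, one_mul]

lemma E_mono_p (g : ℕ → ℝ) (hg : Monotone g) {q p : ℝ} (hq0 : 0 ≤ q) (hqp : q ≤ p)
    (hp1 : p ≤ 1) : ∀ n, E n q g ≤ E n p g := by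
  intro n
  induction n generalizing g with
  | zero => rw [E_zero, E_zero]
  | succ n ih =>
    rw [E_succ, E_succ]
    have hg' : Monotone (fun j => g (j+1)) := fun a b hab => hg (by omega)
    have hA := ih g hg
    have hB := ih _ hg'
    have hAB : E n p g ≤ E n p (fun j => g (j+1)) :=
      E_le_E n p (hq0.trans hqp) hp1 (fun j _ => hg (Nat.le_succ j))
    nlinarith [mul_nonneg (sub_nonneg.2 hqp) (sub_nonneg.2 hAB),
      mul_nonneg (sub_nonneg.2 (hqp.trans hp1 : q ≤ 1)) (sub_nonneg.2 hA),
      mul_nonneg (hq0.trans hqp) (sub_nonneg.2 hB),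
      mul_nonneg hq0 (sub_nonneg.2 hB)]

lemma E_diff_pos (n : ℕ) (x : ℝ) (hx0 : 0 ≤ x) (hx1 : x < 1) {f g : ℕ → ℝ}
    (h : ∀ j ≤ n, f j ≤ g j) (h0 : f 0 < g 0) : E n x f < E n x g := by
  refine Finset.sum_lt_sum (fun j hj => ?_) ⟨0, by simp, ?_⟩
  · have hj' : j ≤ n := Nat.lt_succ_iff.mp (Finset.mem_range.mp hj)
    exact mul_le_mul_of_nonneg_left (h j hj') (coeff_nonneg hx0 hx1.le n j _)
  · have hc : (0:ℝ) < (n.choose 0 : ℝ) * x^0 * (1-x)^(n-0) := by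
      simp only [Nat.choose_zero_right, pow_zero, Nat.cast_one, mul_one, one_mul]
      have : (0:ℝ) < 1 - x := by linarith
      positivity
    exact mul_lt_mul_of_pos_left h0 hc

lemma E_strict (q p : ℝ) (hq0 : 0 ≤ q) (hqp : q < p) (hp1 : p ≤ 1) :
    ∀ n (g : ℕ → ℝ), Monotone g → g 0 < g (n+1) → E (n+1) q g < E (n+1) p g := by
  intro n
  induction n with
  | zero =>
    intro g hg h01
    have e1 := E_succ 0 q g
    have e2 := E_succ 0 p g
    have z1 : E 0 q g = g 0 := E_zero q g
    have z2 : E 0 p g = g 0 := E_zero p g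
    have z3 : E 0 q (fun j => g (j+1)) = g 1 := E_zero q _
    have z4 : E 0 p (fun j => g (j+1)) = g 1 := E_zero p _
    rw [z1, z3] at e1
    rw [z2, z4] at e2
    rw [e1, e2]
    nlinarith [mul_pos (sub_pos.2 hqp) (sub_pos.2 h01)]
  | succ n ih =>
    intro g hg h0
    have e1 := E_succ (n+1) q g
    have e2 := E_succ (n+1) p g
    have hq1 : q < 1 := lt_of_lt_of_le hqp hp1
    have hg' : Monotone (fun j => g (j+1)) := fun a b hab => hg (by omega)
    have hA : E (n+1) q g ≤ E (n+1) p g := E_mono_p g hg hq0 hqp.le hp1 (n+1)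
    have hB : E (n+1) q (fun j => g (j+1)) ≤ E (n+1) p (fun j => g (j+1)) :=
      E_mono_p _ hg' hq0 hqp.le hp1 (n+1)
    rcases lt_or_eq_of_le (hg (Nat.zero_le 1)) with h01 | h01
    · have hD : E (n+1) q g < E (n+1) q (fun j => g (j+1)) :=
        E_diff_pos (n+1) q hq0 hq1 (fun j _ => hg (Nat.le_succ j)) h01
      rw [e1, e2]
      nlinarith [mul_nonneg (sub_nonneg.2 hp1) (sub_nonneg.2 hA),
        mul_pos (sub_pos.2 hqp) (sub_pos.2 hD),
        mul_nonneg (hq0.trans hqp.le) (sub_nonneg.2 hB)]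
    · have h1 : g 1 < g (n+2) := by rw [← h01]; exact h0
      have hBs : E (n+1) q (fun j => g (j+1)) < E (n+1) p (fun j => g (j+1)) :=
        ih _ hg' h1
      have hAB : E (n+1) q g ≤ E (n+1) q (fun j => g (j+1)) :=
        E_le_E (n+1) q hq0 hq1.le (fun j _ => hg (Nat.le_succ j))
      rw [e1, e2]
      nlinarith [mul_nonneg (sub_nonneg.2 hp1) (sub_nonneg.2 hA),
        mul_nonneg (sub_pos.2 hqp).le (sub_nonneg.2 hAB),
        mul_pos (lt_of_le_of_lt hq0 hqp) (sub_pos.2 hBs)]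

lemma v_zero (p : ℝ) : v p 0 = 0 := by rw [v]

/-- The payoff function for the first round of the game with `m+1` coins. -/
noncomputable def gg (p : ℝ) (m : ℕ) (j : ℕ) : ℝ :=
  if h : j = 0 then v p m
  else if h2 : j ≤ m then
    (Finset.Icc 1 j).attach.sup'
      (Finset.attach_nonempty_iff.mpr (Finset.nonempty_Icc.mpr (by omega)))
      (fun i => v p (m + 1 - i.1) + (i.1 : ℝ))
  else (m : ℝ) + 1

lemma gg_zero (p : ℝ) (m : ℕ) : gg p m 0 = v p m := by simp [gg]

lemma gg_top (p : ℝ) (m : ℕ) {j : ℕ} (hj : m + 1 ≤ j) : gg p m j = (m : ℝ) + 1 := by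
  rw [gg, dif_neg (by omega), dif_neg (by omega)]

lemma gg_mid (p : ℝ) (m : ℕ) {j : ℕ} (h1 : 1 ≤ j) (h2 : j ≤ m) :
    gg p m j = (Finset.Icc 1 j).attach.sup'
      (Finset.attach_nonempty_iff.mpr (Finset.nonempty_Icc.mpr h1))
      (fun i => v p (m + 1 - i.1) + (i.1 : ℝ)) := by
  rw [gg, dif_neg (by omega), dif_pos h2]

lemma v_eq_E (p : ℝ) (m : ℕ) : v p (m+1) = E (m+1) p (gg p m) := by
  have hsum : (∑ j ∈ (Finset.Icc 1 m).attach,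
      (((m + 1).choose j.1 : ℕ) : ℝ) * p ^ (j.1 : ℕ) * (1 - p) ^ (m + 1 - j.1) *
        ((Finset.Icc 1 j.1).attach.sup'
          (Finset.attach_nonempty_iff.mpr
            (Finset.nonempty_Icc.mpr (Finset.mem_Icc.mp j.2).1))
          (fun i => v p (m + 1 - i.1) + (i.1 : ℝ))))
      = ∑ j ∈ Finset.range m,
        (((m+1).choose (j+1) : ℕ) : ℝ) * p ^ (j+1) * (1 - p) ^ (m + 1 - (j+1)) *
          gg p m (j+1) := by
    have step1 : ∀ j ∈ (Finset.Icc 1 m).attach,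
        (((m + 1).choose j.1 : ℕ) : ℝ) * p ^ (j.1 : ℕ) * (1 - p) ^ (m + 1 - j.1) *
          ((Finset.Icc 1 j.1).attach.sup'
            (Finset.attach_nonempty_iff.mpr
              (Finset.nonempty_Icc.mpr (Finset.mem_Icc.mp j.2).1))
            (fun i => v p (m + 1 - i.1) + (i.1 : ℝ)))
        = (((m+1).choose j.1 : ℕ) : ℝ) * p ^ (j.1 : ℕ) * (1 - p) ^ (m + 1 - j.1) *
            gg p m j.1 := by
      intro j _
      obtain ⟨h1, h2⟩ := Finset.mem_Icc.mp j.2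
      rw [gg_mid p m h1 h2]
    calc _ = ∑ j ∈ (Finset.Icc 1 m).attach,
          (((m+1).choose j.1 : ℕ) : ℝ) * p ^ (j.1 : ℕ) * (1 - p) ^ (m + 1 - j.1) *
            gg p m j.1 := Finset.sum_congr rfl step1
      _ = ∑ j ∈ Finset.Icc 1 m, (((m+1).choose j : ℕ) : ℝ) * p ^ j *
            (1 - p) ^ (m + 1 - j) * gg p m j :=
          Finset.sum_attach (Finset.Icc 1 m)
            (fun k => (((m+1).choose k : ℕ) : ℝ) * p ^ k * (1 - p) ^ (m + 1 - k) * gg p m k)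
      _ = _ := by
          rw [← Finset.Ico_add_one_right_eq_Icc, Finset.sum_Ico_eq_sum_range]
          exact Finset.sum_congr rfl fun i _ => by rw [add_comm 1 i]
  rw [v, hsum, E, Finset.sum_range_succ, Finset.sum_range_succ']
  rw [gg_zero, gg_top p m (le_refl (m+1))]
  simp only [Nat.choose_self, Nat.choose_zero_right, Nat.cast_one, pow_zero, one_mul,
    Nat.sub_self, mul_one, Nat.cast_add]
  push_cast
  ring

lemma v_le (p : ℝ) (hp0 : 0 ≤ p) (hp1 : p ≤ 1) : ∀ n, v p n ≤ (n : ℝ) := by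
  intro n
  induction n using Nat.strong_induction_on with
  | _ n ih =>
    match n with
    | 0 => rw [v_zero]; simp
    | m + 1 =>
      rw [v_eq_E]
      have hpt : ∀ j ≤ m + 1, gg p m j ≤ ((m:ℝ) + 1) := by
        intro j _
        by_cases h0 : j = 0
        · subst h0; rw [gg_zero]
          have := ih m (by omega)
          linarith
        · by_cases h2 : j ≤ m
          · rw [gg_mid p m (by omega) h2]
            refine Finset.sup'_le _ _ fun i _ => ?_
            obtain ⟨hi1, hi2⟩ := Finset.mem_Icc.mp i.2
            have hle := ih (m + 1 - i.1) (by omega)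
            have hcast : ((m + 1 - i.1 : ℕ) : ℝ) = (m:ℝ) + 1 - (i.1:ℝ) := by
              have : i.1 ≤ m + 1 := by omega
              push_cast [Nat.cast_sub this]
              ring
            rw [hcast] at hle
            linarith
          · rw [gg_top p m (by omega)]
      calc E (m+1) p (gg p m) ≤ E (m+1) p (fun _ => (m:ℝ)+1) := E_le_E _ _ hp0 hp1 hpt
        _ = (m:ℝ)+1 := E_const _ _ _
        _ = ((m+1 : ℕ) : ℝ) := by push_cast; ring

lemma gg_mono (p : ℝ) (hp0 : 0 ≤ p) (hp1 : p ≤ 1) (m : ℕ) : Monotone (gg p m) := by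
  refine monotone_nat_of_le_succ fun j => ?_
  by_cases h0 : j = 0
  · subst h0
    rw [gg_zero]
    by_cases hm : 1 ≤ m
    · rw [gg_mid p m (le_refl 1) hm]
      have hmem : (1 : ℕ) ∈ Finset.Icc 1 1 := by simp
      have := Finset.le_sup' (f := fun i : {x // x ∈ Finset.Icc 1 1} =>
        v p (m + 1 - i.1) + (i.1 : ℝ)) (Finset.mem_attach _ ⟨1, hmem⟩)
      simp only [Nat.add_sub_cancel] at this
      calc v p m ≤ v p m + 1 := by linarith
        _ ≤ _ := by exact_mod_cast this
    · have hm0 : m = 0 := by omega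
      subst hm0
      rw [gg_top p 0 (by omega), v_zero]
      norm_num
  · by_cases h2 : j + 1 ≤ m
    · rw [gg_mid p m (by omega) (by omega), gg_mid p m (by omega) h2]
      refine Finset.sup'_le _ _ fun i _ => ?_
      obtain ⟨hi1, hi2⟩ := Finset.mem_Icc.mp i.2
      have hmem : i.1 ∈ Finset.Icc 1 (j+1) := Finset.mem_Icc.mpr ⟨hi1, by omega⟩
      exact Finset.le_sup' (f := fun i' : {x // x ∈ Finset.Icc 1 (j+1)} =>
        v p (m + 1 - i'.1) + (i'.1 : ℝ)) (Finset.mem_attach _ ⟨i.1, hmem⟩)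
    · by_cases h3 : j ≤ m
      · rw [gg_mid p m (by omega) h3, gg_top p m (by omega)]
        refine Finset.sup'_le _ _ fun i _ => ?_
        obtain ⟨hi1, hi2⟩ := Finset.mem_Icc.mp i.2
        have hle := v_le p hp0 hp1 (m + 1 - i.1)
        have hcast : ((m + 1 - i.1 : ℕ) : ℝ) = (m:ℝ) + 1 - (i.1:ℝ) := by
          have : i.1 ≤ m + 1 := by omega
          push_cast [Nat.cast_sub this]
          ring
        rw [hcast] at hle
        linarith
      · rw [gg_top p m (by omega), gg_top p m (by omega)]

lemma v_mono (q p : ℝ) (hq0 : 0 ≤ q) (hqp : q ≤ p) (hp1 : p ≤ 1) :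
    ∀ n, v q n ≤ v p n := by
  intro n
  induction n using Nat.strong_induction_on with
  | _ n ih =>
    match n with
    | 0 => rw [v_zero, v_zero]
    | m + 1 =>
      have hq1 : q ≤ 1 := hqp.trans hp1
      have hp0 : 0 ≤ p := hq0.trans hqp
      have hpt : ∀ j ≤ m + 1, gg q m j ≤ gg p m j := by
        intro j _
        by_cases h0 : j = 0
        · subst h0; rw [gg_zero, gg_zero]; exact ih m (by omega)
        · by_cases h2 : j ≤ m
          · rw [gg_mid q m (by omega) h2, gg_mid p m (by omega) h2]
            refine Finset.sup'_mono_fun fun i _ => ?_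
            obtain ⟨hi1, hi2⟩ := Finset.mem_Icc.mp i.2
            have := ih (m + 1 - i.1) (by omega)
            linarith
          · rw [gg_top q m (by omega), gg_top p m (by omega)]
      calc v q (m+1) = E (m+1) q (gg q m) := v_eq_E q m
        _ ≤ E (m+1) q (gg p m) := E_le_E _ _ hq0 hq1 hpt
        _ ≤ E (m+1) p (gg p m) := E_mono_p _ (gg_mono p hp0 hp1 m) hq0 hqp hp1 _
        _ = v p (m+1) := (v_eq_E p m).symm

theorem coin_game_v_strict_mono_in_p (p q : ℝ) (hq0 : 0 ≤ q) (hqp : q < p) (hp1 : p ≤ 1)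
    (n : ℕ) (hn : 1 ≤ n) : v q n < v p n := by
  obtain ⟨m, rfl⟩ : ∃ m, n = m + 1 := ⟨n - 1, by omega⟩
  have hq1 : q ≤ 1 := hqp.le.trans hp1
  have hp0 : 0 ≤ p := hq0.trans hqp.le
  have hpt : ∀ j ≤ m + 1, gg q m j ≤ gg p m j := by
    intro j _
    by_cases h0 : j = 0
    · subst h0; rw [gg_zero, gg_zero]; exact v_mono q p hq0 hqp.le hp1 m
    · by_cases h2 : j ≤ m
      · rw [gg_mid q m (by omega) h2, gg_mid p m (by omega) h2]
        refine Finset.sup'_mono_fun fun i _ => ?_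
        have := v_mono q p hq0 hqp.le hp1 (m + 1 - i.1)
        linarith
      · rw [gg_top q m (by omega), gg_top p m (by omega)]
  have hstrict : gg p m 0 < gg p m (m+1) := by
    rw [gg_zero, gg_top p m (le_refl (m+1))]
    have := v_le p hp0 hp1 m
    linarith
  calc v q (m+1) = E (m+1) q (gg q m) := v_eq_E q m
    _ ≤ E (m+1) q (gg p m) := E_le_E _ _ hq0 hq1 hpt
    _ < E (m+1) p (gg p m) :=
        E_strict q p hq0 hqp hp1 m (gg p m) (gg_mono p hp0 hp1 m) hstrict
    _ = v p (m+1) := (v_eq_E p m).symm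
end

section
/- For every real p with 1/2 ≤ p < 1 and every positive integer n, one has s(p) − s_n(p) < p^{n+1}·(n/(1−p) + 1/(1−p)^2). -/
namespace CGaux

noncomputable def M (p : ℝ) (N j : ℕ) : ℝ :=
  if h : 1 ≤ j then
    ((Finset.Icc 1 j).attach).sup'
      (Finset.attach_nonempty_iff.mpr (Finset.nonempty_Icc.mpr h))
      (fun i => v p (N - i.1) + (i.1 : ℝ))
  else 0

lemma M_def (p : ℝ) (N j : ℕ) (h : 1 ≤ j) : M p N j =
    ((Finset.Icc 1 j).attach).sup'
      (Finset.attach_nonempty_iff.mpr (Finset.nonempty_Icc.mpr h))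
      (fun i => v p (N - i.1) + (i.1 : ℝ)) := dif_pos h

lemma le_M (p : ℝ) (N i j : ℕ) (h1 : 1 ≤ i) (h2 : i ≤ j) :
    v p (N - i) + (i : ℝ) ≤ M p N j := by
  rw [M_def p N j (le_trans h1 h2)]
  exact Finset.le_sup' (f := fun i : {x // x ∈ Finset.Icc 1 j} => v p (N - i.1) + (i.1 : ℝ))
    (b := (⟨i, Finset.mem_Icc.mpr ⟨h1, h2⟩⟩ : {x // x ∈ Finset.Icc 1 j}))
    (Finset.mem_attach _ _)

lemma M_le (p : ℝ) (N j : ℕ) (h : 1 ≤ j) (B : ℝ)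
    (hb : ∀ i : ℕ, 1 ≤ i → i ≤ j → v p (N - i) + (i : ℝ) ≤ B) : M p N j ≤ B := by
  rw [M_def p N j h]
  apply Finset.sup'_le
  rintro ⟨i, hi⟩ -
  obtain ⟨h1, h2⟩ := Finset.mem_Icc.mp hi
  exact hb i h1 h2

lemma v_succ (p : ℝ) (n : ℕ) : v p (n + 1) =
    ((n : ℝ) + 1) * p ^ (n + 1) + v p n * (1 - p) ^ (n + 1) +
      ∑ j ∈ Finset.Icc 1 n,
        ((n + 1).choose j : ℝ) * p ^ j * (1 - p) ^ (n + 1 - j) * M p (n + 1) j := by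
  rw [v]
  congr 1
  rw [← Finset.sum_attach (Finset.Icc 1 n)
    (fun j => ((n + 1).choose j : ℝ) * p ^ j * (1 - p) ^ (n + 1 - j) * M p (n + 1) j)]
  apply Finset.sum_congr rfl
  rintro ⟨j, hj⟩ -
  have h1 : 1 ≤ j := (Finset.mem_Icc.mp hj).1
  rw [M_def p (n+1) j h1]

lemma v_zero (p : ℝ) : v p 0 = 0 := by rw [v]

lemma v_one (p : ℝ) : v p 1 = p := by
  rw [v_succ]
  simp [v_zero]

lemma v_two (p : ℝ) : v p 2 = 2 * p ^ 2 + p * (1 - p) ^ 2 + 2 * p * (1 - p) * (p + 1) := by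
  have hM : M p 2 1 = p + 1 := by
    apply le_antisymm
    · apply M_le p 2 1 le_rfl
      intro i h1 h2
      have : i = 1 := le_antisymm h2 h1
      subst this
      simp [v_one]
    · have := le_M p 2 1 1 le_rfl le_rfl
      simpa [v_one] using this
  rw [v_succ]
  norm_num [Finset.Icc_self, v_one, hM]

lemma sum_w (p : ℝ) (n : ℕ) :
    ∑ j ∈ Finset.Icc 1 n, ((n + 1).choose j : ℝ) * p ^ j * (1 - p) ^ (n + 1 - j)
      = 1 - p ^ (n + 1) - (1 - p) ^ (n + 1) := by
  have h : ((p + (1 - p)) ^ (n + 1) : ℝ)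
      = ∑ k ∈ Finset.range (n + 2), p ^ k * (1 - p) ^ (n + 1 - k) * ((n + 1).choose k : ℝ) :=
    add_pow p (1 - p) (n + 1)
  rw [Finset.sum_range_succ, Finset.sum_range_succ'] at h
  have h2 : ∑ j ∈ Finset.Icc 1 n, ((n + 1).choose j : ℝ) * p ^ j * (1 - p) ^ (n + 1 - j)
      = ∑ i ∈ Finset.range n, p ^ (i + 1) * (1 - p) ^ (n + 1 - (i + 1)) * ((n + 1).choose (i + 1) : ℝ) := by
    rw [← Finset.Ico_add_one_right_eq_Icc, Finset.sum_Ico_eq_sum_range]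
    have : n + 1 - 1 = n := rfl
    rw [this]
    apply Finset.sum_congr rfl
    intro i _
    rw [Nat.add_comm 1 i]
    ring
  rw [h2]
  have h3 : ((p + (1 - p)) ^ (n + 1) : ℝ) = 1 := by norm_num
  simp only [pow_zero, Nat.choose_zero_right, Nat.cast_one, mul_one, one_mul,
    Nat.sub_zero, Nat.choose_self, Nat.sub_self] at h
  rw [h3] at h
  linarith [h]

noncomputable def dl (p : ℝ) (m : ℕ) : ℝ := (m : ℝ) - v p m

lemma dl_def (p : ℝ) (m : ℕ) : v p m = (m : ℝ) - dl p m := by rw [dl]; ring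

lemma M_eval_small (p : ℝ) (m j : ℕ) (h1 : 1 ≤ j) (hjm : j + 1 ≤ m) (hm : 2 ≤ m)
    (mono : ∀ k, 2 ≤ k → k ≤ m → dl p m ≤ dl p k) : M p (m + 1) j = v p m + 1 := by
  apply le_antisymm
  · apply M_le p (m+1) j h1
    intro i hi1 hij
    have him : i + 1 ≤ m := le_trans (Nat.add_le_add_right hij 1) hjm
    have hcast : ((m + 1 - i : ℕ) : ℝ) = (m : ℝ) + 1 - i := by
      have : i ≤ m + 1 := by omega
      push_cast [Nat.cast_sub this]
      ring
    have h2 : 2 ≤ m + 1 - i := by omega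
    have h3 : m + 1 - i ≤ m := by omega
    have := mono (m + 1 - i) h2 h3
    rw [dl_def p (m + 1 - i), dl_def p m, hcast]
    have hi' : (1 : ℝ) ≤ (i : ℝ) := by exact_mod_cast hi1
    linarith [this]
  · have := le_M p (m+1) 1 j le_rfl h1
    simpa using this

lemma M_eval_top (p : ℝ) (m : ℕ) (hm : 2 ≤ m)
    (mono : ∀ k, 2 ≤ k → k ≤ m → dl p m ≤ dl p k) :
    M p (m + 1) m = max (v p m + 1) (p + m) := by
  apply le_antisymm
  · apply M_le p (m+1) m (by omega)
    intro i hi1 him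
    rcases eq_or_lt_of_le him with heq | hlt
    · subst heq
      have : i + 1 - i = 1 := by omega
      rw [this, v_one]
      exact le_max_of_le_right (by push_cast; linarith)
    · apply le_max_of_le_left
      have him' : i + 1 ≤ m := hlt
      have hcast : ((m + 1 - i : ℕ) : ℝ) = (m : ℝ) + 1 - i := by
        have : i ≤ m + 1 := by omega
        push_cast [Nat.cast_sub this]
        ring
      have := mono (m + 1 - i) (by omega) (by omega)
      rw [dl_def p (m + 1 - i), dl_def p m, hcast]
      have hi' : (1 : ℝ) ≤ (i : ℝ) := by exact_mod_cast hi1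
      linarith [this]
  · apply max_le
    · have := le_M p (m+1) 1 m le_rfl (by omega)
      simpa using this
    · have := le_M p (m+1) m m (by omega) le_rfl
      have h1 : m + 1 - m = 1 := by omega
      rw [h1, v_one] at this
      exact this

lemma key_eq (p : ℝ) (m : ℕ) (hm : 2 ≤ m)
    (mono : ∀ k, 2 ≤ k → k ≤ m → dl p m ≤ dl p k) :
    dl p (m + 1) = (1 - p) ^ (m + 1) * (1 + dl p m)
      + (1 - p ^ (m + 1) - (1 - p) ^ (m + 1) - ((m : ℝ) + 1) * p ^ m * (1 - p)) * dl p m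
      + ((m : ℝ) + 1) * p ^ m * (1 - p) * min (dl p m) (1 - p) := by
  obtain ⟨m', rfl⟩ : ∃ m', m = m' + 1 := ⟨m - 1, by omega⟩
  have hsplit : ∑ j ∈ Finset.Icc 1 (m' + 1),
        (((m' + 1) + 1).choose j : ℝ) * p ^ j * (1 - p) ^ ((m' + 1) + 1 - j) * M p ((m' + 1) + 1) j
      = (∑ j ∈ Finset.Icc 1 m',
          (((m' + 1) + 1).choose j : ℝ) * p ^ j * (1 - p) ^ ((m' + 1) + 1 - j)) * (v p (m' + 1) + 1)
        + (((m' + 1) + 1).choose (m' + 1) : ℝ) * p ^ (m' + 1) * (1 - p) * M p ((m' + 1) + 1) (m' + 1) := by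
    rw [Finset.sum_Icc_succ_top (by omega : 1 ≤ m' + 1), Finset.sum_mul]
    congr 1
    · apply Finset.sum_congr rfl
      intro j hj
      obtain ⟨hj1, hj2⟩ := Finset.mem_Icc.mp hj
      rw [M_eval_small p (m' + 1) j hj1 (by omega) hm mono]
    · have : (m' + 1) + 1 - (m' + 1) = 1 := by omega
      rw [this, pow_one]
  have hbin : ∑ j ∈ Finset.Icc 1 m',
        (((m' + 1) + 1).choose j : ℝ) * p ^ j * (1 - p) ^ ((m' + 1) + 1 - j)
      = 1 - p ^ (m' + 2) - (1 - p) ^ (m' + 2) - ((m' : ℝ) + 2) * p ^ (m' + 1) * (1 - p) := by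
    have h := sum_w p (m' + 1)
    rw [Finset.sum_Icc_succ_top (by omega : 1 ≤ m' + 1)] at h
    have hch : (((m' + 1) + 1).choose (m' + 1) : ℝ) = (m' : ℝ) + 2 := by
      rw [Nat.choose_succ_self_right]
      push_cast; ring
    have hsub : (m' + 1) + 1 - (m' + 1) = 1 := by omega
    rw [hsub, pow_one, hch] at h
    linarith [h]
  have hMtop := M_eval_top p (m' + 1) hm mono
  have hch : (((m' + 1) + 1).choose (m' + 1) : ℝ) = (m' : ℝ) + 2 := by
    rw [Nat.choose_succ_self_right]; push_cast; ring
  have hdl1 : dl p (m' + 1) = ((m' : ℝ) + 1) - v p (m' + 1) := by rw [dl]; push_cast; ring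
  have hmax : max (v p (m' + 1) + 1) (p + ((m' + 1 : ℕ) : ℝ))
      = ((m' : ℝ) + 2) - min (dl p (m' + 1)) (1 - p) := by
    rcases le_total (dl p (m' + 1)) (1 - p) with h | h
    · rw [min_eq_left h]
      rw [hdl1] at h
      rw [max_eq_left (by push_cast; linarith)]
      rw [hdl1]; push_cast; ring
    · rw [min_eq_right h]
      rw [hdl1] at h
      rw [max_eq_right (by push_cast; linarith)]
      push_cast; ring
  have hv := v_succ p (m' + 1)
  rw [hsplit, hbin, hch, hMtop, hmax] at hv
  have hgoal : dl p (m' + 1 + 1) = ((m' : ℝ) + 2) - v p (m' + 1 + 1) := by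
    rw [dl]; push_cast; ring
  rw [hgoal, hv, dl_def p (m' + 1)]
  push_cast
  ring

lemma dl_one (p : ℝ) : dl p 1 = 1 - p := by rw [dl, v_one]; norm_num

lemma dl_two (p : ℝ) : dl p 2 = (1 - p) ^ 2 * (p + 2) := by
  rw [dl, v_two]; push_cast; ring

lemma S_nonneg (p : ℝ) (hp0 : 0 ≤ p) (hp1 : p ≤ 1) (m : ℕ) (hm : 2 ≤ m) :
    0 ≤ 1 - p ^ (m + 1) - (1 - p) ^ (m + 1) - ((m : ℝ) + 1) * p ^ m * (1 - p) := by
  obtain ⟨m', rfl⟩ : ∃ m', m = m' + 1 := ⟨m - 1, by omega⟩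
  have h := sum_w p (m' + 1)
  rw [Finset.sum_Icc_succ_top (by omega : 1 ≤ m' + 1)] at h
  have hch : (((m' + 1) + 1).choose (m' + 1) : ℝ) = (m' : ℝ) + 2 := by
    rw [Nat.choose_succ_self_right]; push_cast; ring
  have hsub : (m' + 1) + 1 - (m' + 1) = 1 := by omega
  rw [hsub, pow_one, hch] at h
  have hnn : 0 ≤ ∑ j ∈ Finset.Icc 1 m',
      (((m' + 1) + 1).choose j : ℝ) * p ^ j * (1 - p) ^ ((m' + 1) + 1 - j) := by
    apply Finset.sum_nonneg
    intro j _
    have : (0:ℝ) ≤ ((m' + 1 + 1).choose j : ℝ) := by positivity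
    have h2 : (0:ℝ) ≤ p ^ j := by positivity
    have h3 : (0:ℝ) ≤ (1 - p) ^ (m' + 1 + 1 - j) := by
      apply pow_nonneg; linarith
    positivity
  push_cast at h ⊢
  nlinarith [hnn]

/-- The inductive invariant. -/
def Iv (p : ℝ) (m : ℕ) : Prop :=
  (1 - p) ^ (m + 1) ≤ p ^ (m + 1) * dl p m ∨
  (1 - p ≤ dl p m ∧
    (1 - p) ^ (m + 1) + ((m : ℝ) + 1) * p ^ m * (1 - p) ^ 2
      ≤ (p ^ (m + 1) + ((m : ℝ) + 1) * p ^ m * (1 - p)) * dl p m)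

section Analytic

variable (p : ℝ) (hp1 : 1 / 2 ≤ p) (hp2 : p < 1)

include hp1 hp2

lemma base_Iv : Iv p 2 := by
  have hq0 : 0 < 1 - p := by linarith
  have hd2 := dl_two p
  by_cases hb : (1 - p) ^ 2 ≤ p ^ 3
  · left
    rw [hd2]
    -- p^3 * ((1-p)^2 * (p+2)) ≥ (1-p)^3 ⟸ p^3*(p+2) ≥ 1-p
    have key : 1 - p ≤ p ^ 3 * (p + 2) := by
      by_cases hc : (1 - p) * (p + 2) ≤ 1
      · nlinarith [hc, sq_nonneg p, sq_nonneg (1 - p)]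
      · push_neg at hc
        nlinarith [hb, mul_le_mul_of_nonneg_right hb (by linarith : (0:ℝ) ≤ p + 2)]
    calc (1 - p) ^ 3 = (1 - p) * (1 - p) ^ 2 := by ring
    _ ≤ (p ^ 3 * (p + 2)) * (1 - p) ^ 2 := by
        apply mul_le_mul_of_nonneg_right key (by positivity)
    _ = p ^ 3 * ((1 - p) ^ 2 * (p + 2)) := by ring
  · right
    push_neg at hb
    have hqp2 : p ^ 2 < 1 - p := by
      nlinarith [hb, sq_nonneg (1 - p - p ^ 2)]
    constructor
    · rw [hd2]; nlinarith [hqp2]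
    · rw [hd2]
      push_cast
      nlinarith [mul_nonneg (mul_nonneg (mul_nonneg hq0.le (by linarith : (0:ℝ) ≤ 2 * p - 1))
        (sq_nonneg (p + 1))) (sq_nonneg (1 - p))]

set_option maxHeartbeats 2000000 in
lemma main_ind (m : ℕ) (hm : 2 ≤ m) :
    Iv p m ∧ ∀ k, 2 ≤ k → k ≤ m → dl p m ≤ dl p k := by
  have hq0 : (0:ℝ) < 1 - p := by linarith
  have hp0 : (0:ℝ) < p := by linarith
  have hqp : 1 - p ≤ p := by linarith
  induction m, hm using Nat.le_induction with
  | base =>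
    refine ⟨base_Iv p hp1 hp2, fun k h2 hk => ?_⟩
    have : k = 2 := le_antisymm hk h2
    subst this; exact le_rfl
  | succ m hm IH =>
    obtain ⟨hI, hmono⟩ := IH
    have hkey := key_eq p m hm hmono
    set δ := dl p m with hδdef
    set w : ℝ := ((m:ℝ)+1) * p^m * (1-p) with hwdef
    have hm1 : (0:ℝ) ≤ (m:ℝ) + 1 := by positivity
    have hpm : (0:ℝ) < p^m := by positivity
    have hqm : (0:ℝ) < (1-p)^m := by positivity
    have hpm1 : (0:ℝ) < p^(m+1) := by positivity
    have hqm1 : (0:ℝ) < (1-p)^(m+1) := by positivity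
    have hw0 : (0:ℝ) < w := by rw [hwdef]; positivity
    have hS := S_nonneg p hp0.le hp2.le m hm
    rw [← hwdef] at hS
    have h5 : dl p (m+1) = δ + (1-p)^(m+1) - p^(m+1)*δ - w*(δ - min δ (1-p)) := by
      rw [hkey]; ring
    have hminle : min δ (1 - p) ≤ δ := min_le_left _ _
    have hwq : ((m:ℝ)+1)*p^m*(1-p)^2 = w*(1-p) := by rw [hwdef]; ring
    -- the C inequality, giving monotonicity
    have hC : (1-p)^(m+1) ≤ p^(m+1) * δ + w * (δ - min δ (1-p)) := by
      rcases hI with h | ⟨h1, h2⟩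
      · have h6 : 0 ≤ w * (δ - min δ (1-p)) := mul_nonneg hw0.le (by linarith)
        linarith
      · rw [min_eq_right h1]
        rw [hwq] at h2
        nlinarith [h2]
    have hmono1 : dl p (m+1) ≤ δ := by rw [h5]; linarith [hC]
    have hmono' : ∀ k, 2 ≤ k → k ≤ m+1 → dl p (m+1) ≤ dl p k := by
      intro k h2 hk
      rcases eq_or_lt_of_le hk with heq | hlt
      · subst heq; exact le_rfl
      · exact le_trans hmono1 (hmono k h2 (by omega))
    refine ⟨?_, hmono'⟩
    -- disj2 facts when in the high regime at m
    have hd2 : p^(m+1) ≤ (1-p)^m →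
        (1 - p ≤ δ ∧ (1-p)^(m+1) + w*(1-p) ≤ (p^(m+1) + w)*δ) := by
      intro hlm
      have hgeom : p^(m+1)*(1-p) ≤ (1-p)^(m+1) := by
        calc p^(m+1)*(1-p) ≤ (1-p)^m*(1-p) :=
              mul_le_mul_of_nonneg_right hlm hq0.le
        _ = (1-p)^(m+1) := by rw [← pow_succ]
      rcases hI with h | ⟨h1, h2⟩
      · have hδq : 1 - p ≤ δ := by
          have h7 : p^(m+1)*(1-p) ≤ p^(m+1)*δ := le_trans hgeom h
          exact le_of_mul_le_mul_left h7 hpm1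
        refine ⟨hδq, ?_⟩
        have h8 : w*(1-p) ≤ w*δ := mul_le_mul_of_nonneg_left hδq hw0.le
        nlinarith [h, h8]
      · rw [hwq] at h2
        exact ⟨h1, by nlinarith [h2]⟩
    -- δ' ≥ q in the high regime at m
    have hδ'q : p^(m+1) ≤ (1-p)^m → 1 - p ≤ dl p (m+1) := by
      intro hlm
      obtain ⟨h1, _⟩ := hd2 hlm
      have hgeom : p^(m+1)*(1-p) ≤ (1-p)^(m+1) := by
        calc p^(m+1)*(1-p) ≤ (1-p)^m*(1-p) :=
              mul_le_mul_of_nonneg_right hlm hq0.le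
        _ = (1-p)^(m+1) := by rw [← pow_succ]
      rw [hkey, min_eq_right h1]
      have b1 : (1-p)^(m+1)*(1+(1-p)) ≤ (1-p)^(m+1)*(1+δ) :=
        mul_le_mul_of_nonneg_left (by linarith) hqm1.le
      have b2 : (1 - p^(m+1) - (1-p)^(m+1) - w)*(1-p)
          ≤ (1 - p^(m+1) - (1-p)^(m+1) - w)*δ :=
        mul_le_mul_of_nonneg_left h1 hS
      nlinarith [b1, b2, hgeom]
    by_cases hlow' : (1-p)^(m+1) ≤ p^(m+2)
    · -- low regime at m+1 : prove first disjunct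
      left
      by_cases hlm : (1-p)^m ≤ p^(m+1)
      · -- low at m
        have hD1 : (1-p)^(m+1) ≤ p^(m+1) * δ := by
          rcases hI with h | ⟨h1, h2⟩
          · exact h
          · calc (1-p)^(m+1) = (1-p)^m * (1-p) := by rw [← pow_succ]
            _ ≤ p^(m+1) * (1-p) := mul_le_mul_of_nonneg_right hlm hq0.le
            _ ≤ p^(m+1) * δ := mul_le_mul_of_nonneg_left h1 hpm1.le
        set t : ℝ := (1-p)^(m+1) / p^(m+1) with htdef
        have ht_eq : p^(m+1) * t = (1-p)^(m+1) := by
          rw [htdef]; field_simp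
        have htδ : t ≤ δ := by
          rw [htdef, div_le_iff₀ hpm1]; nlinarith [hD1]
        have htq : t ≤ 1 - p := by
          rw [htdef, div_le_iff₀ hpm1]
          calc (1-p)^(m+1) = (1-p)^m * (1-p) := by rw [← pow_succ]
          _ ≤ p^(m+1) * (1-p) := mul_le_mul_of_nonneg_right hlm hq0.le
          _ = (1-p) * p^(m+1) := by ring
        have htmin : t ≤ min δ (1-p) := le_min htδ htq
        have ht0 : 0 ≤ t := by positivity
        clear_value t
        have hA : (1-p)^(m+1)*(1+t) + (1 - p^(m+1) - (1-p)^(m+1) - w)*t + w*t = t := by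
          linear_combination -ht_eq
        have hδ' : t ≤ dl p (m+1) := by
          rw [hkey]
          have b1 : (1-p)^(m+1)*(1+t) ≤ (1-p)^(m+1)*(1+δ) :=
            mul_le_mul_of_nonneg_left (by linarith) hqm1.le
          have b2 : (1 - p^(m+1) - (1-p)^(m+1) - w)*t
              ≤ (1 - p^(m+1) - (1-p)^(m+1) - w)*δ :=
            mul_le_mul_of_nonneg_left htδ hS
          have b3 : w*t ≤ w*(min δ (1-p)) := mul_le_mul_of_nonneg_left htmin hw0.le
          linarith [hA]
        have hfin : p^(m+2) * t = p * (1-p)^(m+1) := by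
          have : p^(m+2) = p * p^(m+1) := by ring
          rw [this, mul_assoc, ht_eq]
        calc (1-p)^(m+1+1) = (1-p)^(m+1)*(1-p) := by rw [← pow_succ]
        _ ≤ (1-p)^(m+1)*p := mul_le_mul_of_nonneg_left hqp hqm1.le
        _ = p^(m+2) * t := by rw [hfin]; ring
        _ ≤ p^(m+2) * dl p (m+1) := mul_le_mul_of_nonneg_left hδ' (by positivity)
        _ = p^(m+1+1) * dl p (m+1) := by norm_num
      · -- high at m
        push_neg at hlm
        have hq' := hδ'q hlm.le
        calc (1-p)^(m+1+1) = (1-p)^(m+1)*(1-p) := by rw [← pow_succ]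
        _ ≤ p^(m+2)*(1-p) := mul_le_mul_of_nonneg_right hlow' hq0.le
        _ ≤ p^(m+2)*dl p (m+1) := mul_le_mul_of_nonneg_left hq' (by positivity)
        _ = p^(m+1+1) * dl p (m+1) := by norm_num
    · -- high regime at m+1 : prove second disjunct
      right
      push_neg at hlow'
      have hlm : p^(m+1) ≤ (1-p)^m := by
        have h9 : p^(m+1)*(1-p) ≤ p^(m+2) := by
          have : p^(m+2) = p^(m+1)*p := by ring
          rw [this]
          exact mul_le_mul_of_nonneg_left hqp hpm1.le
        have h10 : p^(m+1)*(1-p) ≤ (1-p)^m*(1-p) := by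
          have := hlow'.le
          calc p^(m+1)*(1-p) ≤ p^(m+2) := h9
          _ ≤ (1-p)^(m+1) := hlow'.le
          _ = (1-p)^m*(1-p) := by rw [← pow_succ]
        exact le_of_mul_le_mul_right h10 hq0
      obtain ⟨h1, h2⟩ := hd2 hlm
      have hq' := hδ'q hlm
      set w' : ℝ := ((m:ℝ)+2)*p^(m+1)*(1-p) with hw'def
      have hw'0 : (0:ℝ) < w' := by rw [hw'def]; positivity
      have hden : (0:ℝ) < p^(m+1) + w := by linarith
      have hden' : (0:ℝ) < p^(m+2) + w' := by positivity
      set θ : ℝ := ((1-p)^(m+1) + w*(1-p))/(p^(m+1)+w) with hθdef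
      have hθeq : θ*(p^(m+1)+w) = (1-p)^(m+1) + w*(1-p) := by
        rw [hθdef]; field_simp
      have hθδ : θ ≤ δ := by
        rw [hθdef, div_le_iff₀ hden]; nlinarith [h2]
      have hθq : 1 - p ≤ θ := by
        rw [hθdef, le_div_iff₀ hden]
        have hgeom : p^(m+1)*(1-p) ≤ (1-p)^(m+1) := by
          calc p^(m+1)*(1-p) ≤ (1-p)^m*(1-p) :=
                mul_le_mul_of_nonneg_right hlm hq0.le
          _ = (1-p)^(m+1) := by rw [← pow_succ]
        nlinarith [hgeom]
      have hθ0 : 0 ≤ θ := le_trans hq0.le hθq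
      clear_value θ
      have hA : (1-p)^(m+1)*(1+θ) + (1 - p^(m+1) - (1-p)^(m+1) - w)*θ + w*(1-p) = θ := by
        linear_combination -hθeq
      have hδ'θ : θ ≤ dl p (m+1) := by
        rw [hkey, min_eq_right h1]
        have b1 : (1-p)^(m+1)*(1+θ) ≤ (1-p)^(m+1)*(1+δ) :=
          mul_le_mul_of_nonneg_left (by linarith) hqm1.le
        have b2 : (1 - p^(m+1) - (1-p)^(m+1) - w)*θ
            ≤ (1 - p^(m+1) - (1-p)^(m+1) - w)*δ :=
          mul_le_mul_of_nonneg_left hθδ hS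
        linarith [hA]
      -- θ' ≤ θ : the cross-multiplied inequality
      have hba : p^m * (1-p) ≤ (1-p)^m := by
        have e1 : p^(m+2) = p^m*p^2 := by ring
        have e2 : (1-p)^(m+1) = (1-p)^m*(1-p) := by rw [← pow_succ]
        have h11 := hlow'.le
        rw [e1, e2] at h11
        nlinarith [h11, hpm, hqm, sq_nonneg (p - (1-p))]
      have hθ'θ : ((1-p)^(m+2) + w'*(1-p))/(p^(m+2)+w') ≤ θ := by
        rw [hθdef, div_le_div_iff₀ hden' hden]
        have e1 : p^(m+1) = p^m*p := by ring
        have e2 : p^(m+2) = p^m*p^2 := by ring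
        have e3 : (1-p)^(m+1) = (1-p)^m*(1-p) := by rw [← pow_succ]
        have e4 : (1-p)^(m+2) = (1-p)^m*(1-p)^2 := by
          rw [pow_add]
        rw [hwdef, hw'def, e1, e2, e3, e4]
        have H1 : 0 ≤ p^m * (1-p) * p^2 * ((1-p)^m - p^m * (1-p)) :=
          mul_nonneg (by positivity) (sub_nonneg.2 hba)
        have H2 : 0 ≤ ((m:ℝ)+1) * (p^m * (1-p) * ((1-p)^m * (1-p)) * (p - (1-p))) :=
          mul_nonneg hm1 (mul_nonneg (by positivity) (by linarith))
        nlinarith [H1, H2]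
      have hfinal : (1-p)^(m+2) + w'*(1-p) ≤ (p^(m+2)+w') * dl p (m+1) := by
        have h12 : ((1-p)^(m+2) + w'*(1-p))/(p^(m+2)+w') ≤ dl p (m+1) :=
          le_trans hθ'θ hδ'θ
        rw [div_le_iff₀ hden'] at h12
        linarith [h12]
      constructor
      · exact hq'
      · have ecast : ((m+1:ℕ):ℝ) + 1 = (m:ℝ) + 2 := by push_cast; ring
        rw [ecast]
        have e5 : ((m:ℝ)+2)*p^(m+1)*(1-p)^2 = w'*(1-p) := by rw [hw'def]; ring
        have e6 : p^(m+1+1) = p^(m+2) := by norm_num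
        have e7 : (1-p)^(m+1+1) = (1-p)^(m+2) := by norm_num
        rw [e5, e6, e7, ← hw'def]
        linarith [hfinal]

lemma dl2_le : dl p 2 ≤ 5/8 := by
  rw [dl_two]
  nlinarith [mul_nonneg (by linarith : (0:ℝ) ≤ p - 1/2) (by nlinarith : (0:ℝ) ≤ 11/4 - p^2 - p/2)]

lemma step_bound (m : ℕ) (hm : 1 ≤ m) :
    dl p m - dl p (m+1) ≤ ((m:ℝ)+1) * p^(m+1) - (1-p)^(m+1) := by
  have hq0 : (0:ℝ) < 1 - p := by linarith
  have hp0 : (0:ℝ) < p := by linarith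
  rcases eq_or_lt_of_le hm with heq | hm2
  · -- m = 1
    rw [← heq]
    rw [show (1:ℕ) + 1 = 2 from rfl, dl_one, dl_two]
    push_cast
    nlinarith [sq_nonneg (1-p), sq_nonneg p, mul_pos hq0 hp0]
  · have hm2 : 2 ≤ m := hm2
    obtain ⟨hI, hmono⟩ := main_ind p hp1 hp2 m hm2
    have hkey := key_eq p m hm2 hmono
    set δ := dl p m with hδdef
    set w : ℝ := ((m:ℝ)+1) * p^m * (1-p) with hwdef
    have hpm : (0:ℝ) < p^m := by positivity
    have hw0 : (0:ℝ) < w := by rw [hwdef]; positivity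
    have h5 : dl p (m+1) = δ + (1-p)^(m+1) - p^(m+1)*δ - w*(δ - min δ (1-p)) := by
      rw [hkey]; ring
    have hδ58 : δ ≤ 5/8 := le_trans (hmono 2 le_rfl hm2) (dl2_le p hp1 hp2)
    have hmain : p^(m+1)*δ + w*(δ - min δ (1-p)) ≤ ((m:ℝ)+1) * p^(m+1) := by
      rcases le_total δ (1-p) with hc | hc
      · rw [min_eq_left hc]
        have h7 : p^(m+1)*δ ≤ p^(m+1)*1 :=
          mul_le_mul_of_nonneg_left (by linarith) (by positivity)
        have h8 : (1:ℝ) ≤ (m:ℝ)+1 := by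
          have : (1:ℝ) ≤ (m:ℝ) := by exact_mod_cast hm
          linarith
        nlinarith [h7, h8, pow_pos hp0 (m+1)]
      · rw [min_eq_right hc]
        have hmr : (2:ℝ) ≤ (m:ℝ) := by exact_mod_cast hm2
        have hscal : p*δ + ((m:ℝ)+1)*(1-p)*(δ-(1-p)) ≤ ((m:ℝ)+1)*p := by
          nlinarith [sq_nonneg (11/8 - 2*p), hmr, hδ58, hc,
            mul_nonneg (by linarith : (0:ℝ) ≤ (m:ℝ) - 2)
              (by nlinarith [sq_nonneg (11/8 - 2*p)] : (0:ℝ) ≤ p - (1-p)*(δ-(1-p)))]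
        have := mul_le_mul_of_nonneg_left hscal hpm.le
        calc p^(m+1)*δ + w*(δ - (1-p))
            = p^m * (p*δ + ((m:ℝ)+1)*(1-p)*(δ-(1-p))) := by rw [hwdef]; ring
        _ ≤ p^m * (((m:ℝ)+1)*p) := this
        _ = ((m:ℝ)+1) * p^(m+1) := by ring
    linarith [h5, hmain]

/-- The limiting bound function. -/
noncomputable def F (p : ℝ) (k : ℕ) : ℝ := p ^ (k+1) * ((k : ℝ) / (1 - p) + 1 / (1 - p) ^ 2)

lemma F_diff (m : ℕ) : F p m - F p (m+1) = ((m:ℝ)+1) * p^(m+1) := by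
  have hq0 : (0:ℝ) < 1 - p := by linarith
  rw [F, F]
  push_cast
  field_simp
  ring

lemma F_nonneg (N : ℕ) : 0 ≤ F p N := by
  have hq0 : (0:ℝ) < 1 - p := by linarith
  have hp0 : (0:ℝ) < p := by linarith
  rw [F]
  apply mul_nonneg (by positivity)
  apply add_nonneg (div_nonneg (by positivity) hq0.le)
  positivity

lemma telescope (n : ℕ) (hn : 1 ≤ n) :
    ∀ N, n + 1 ≤ N → dl p n - dl p N ≤ F p n - F p N - (1-p)^(n+1) := by
  intro N hN
  induction N, hN using Nat.le_induction with
  | base =>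
    have h1 := step_bound p hp1 hp2 n hn
    have h2 := F_diff p hp1 hp2 n
    linarith
  | succ N hN IH =>
    have h1 := step_bound p hp1 hp2 N (by omega)
    have h2 := F_diff p hp1 hp2 N
    have hq0 : (0:ℝ) < 1 - p := by linarith
    have h3 : (0:ℝ) < (1-p)^(N+1) := by positivity
    linarith

end Analytic

end CGaux

theorem coin_game_convergence_speed (S : ℝ → ℝ)
    (hS : ∀ p : ℝ, 1 / 2 ≤ p → p ≤ 1 →
      Filter.Tendsto (fun n : ℕ => s p n) Filter.atTop (nhds (S p)))
    (p : ℝ) (hp1 : 1 / 2 ≤ p) (hp2 : p < 1) (n : ℕ) (hn : 1 ≤ n) :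
    S p - s p n < p ^ (n + 1) * ((n : ℝ) / (1 - p) + 1 / (1 - p) ^ 2) := by
  have hq0 : (0:ℝ) < 1 - p := by linarith
  have hs_dl : ∀ N : ℕ, s p N = 1 - p - CGaux.dl p N := by
    intro N
    rw [s, CGaux.dl]
    ring
  have hle : ∀ N, n + 1 ≤ N → s p N ≤ s p n + (CGaux.F p n - (1-p)^(n+1)) := by
    intro N hN
    have h1 := CGaux.telescope p hp1 hp2 n hn N hN
    have h2 := CGaux.F_nonneg p hp1 hp2 N
    rw [hs_dl N, hs_dl n]
    linarith
  have hlim : S p ≤ s p n + (CGaux.F p n - (1-p)^(n+1)) := by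
    apply le_of_tendsto (hS p hp1 hp2.le)
    exact Filter.eventually_atTop.2 ⟨n + 1, hle⟩
  have hqpow : (0:ℝ) < (1-p)^(n+1) := by positivity
  have hF : CGaux.F p n = p ^ (n + 1) * ((n : ℝ) / (1 - p) + 1 / (1 - p) ^ 2) := rfl
  linarith [hlim, hqpow, hF.le]
end
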